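/- Each of the vector fields X_1, …, X_n on ℝ^n dual to the Maurer–Cartan coframe of 𝔤 is complete: for every i ∈ {1, …, n} and every x_0 ∈ ℝ^n there exists a curve γ : ℝ → ℝ^n, defined for all time, with γ(0) = x_0 and γ′(t) = X_i(γ(t)) for all t ∈ ℝ. -/

import Mathlib

open scoped BigOperators

noncomputable section

/-- The matrix exponential. -/
def matExp {k : ℕ} (A : Matrix (Fin k) (Fin k) ℝ) : Matrix (Fin k) (Fin k) ℝ :=
  NormedSpace.exp A

/-- Exterior derivative of a smooth 1-form, evaluated at `x` on vectors `u, v`. -/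
def extDeriv' {E : Type*} [NormedAddCommGroup E] [NormedSpace ℝ E]
    (ω : E → E →L[ℝ] ℝ) (x u v : E) : ℝ :=
  fderiv ℝ ω x u v - fderiv ℝ ω x v u

/-- Wedge product of two 1-forms, evaluated at `x` on vectors `u, v`. -/
def wedge {E : Type*} [NormedAddCommGroup E] [NormedSpace ℝ E]
    (α β : E → E →L[ℝ] ℝ) (x u v : E) : ℝ :=
  α x u * β x v - α x v * β x u

/-- The 1-forms `ω i` satisfy the structure equations with structure constants `C`:
`dωⁱ + (1/2) Σ_{j,k} Cⁱ_{jk} ωʲ ∧ ωᵏ = 0`. -/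
def StructEq {E : Type*} [NormedAddCommGroup E] [NormedSpace ℝ E] {n : ℕ}
    (C : Fin n → Fin n → Fin n → ℝ) (ω : Fin n → E → E →L[ℝ] ℝ) : Prop :=
  ∀ i x u v, extDeriv' (ω i) x u v
    + (1 / 2) * ∑ j, ∑ k, C i j k * wedge (ω j) (ω k) x u v = 0

/-- The matrix of `ad(e_i)` in the basis `e`: its `(a,b)` entry is `C a i b`, where
`⁅e_j, e_k⁆ = Σ_i C i j k • e_i`. -/
def adMat {n : ℕ} (C : Fin n → Fin n → Fin n → ℝ) (i : Fin n) :
    Matrix (Fin n) (Fin n) ℝ := fun a b => C a i b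

/-- The `(n-s) × (n-s)` matrix, in the basis `(e_1, …, e_{n-s})` of the ideal `𝔨_s`,
of the restriction of `ad(e_{n-s})` to `𝔨_s`. -/
def adRes {n : ℕ} (C : Fin n → Fin n → Fin n → ℝ) (s : ℕ) (hs : s < n) :
    Matrix (Fin (n - s)) (Fin (n - s)) ℝ :=
  fun a b => C (Fin.castLE (Nat.sub_le n s) a) ⟨n - s - 1, by omega⟩
    (Fin.castLE (Nat.sub_le n s) b)

/-- The block-diagonal matrix `D_s(t)` with upper-left block `exp(t·[ad_s(e_{n-s})])`
and lower-right block the `s × s` identity. -/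
def Dmat {n : ℕ} (C : Fin n → Fin n → Fin n → ℝ) (s : ℕ) (hs : s < n) (t : ℝ) :
    Matrix (Fin n) (Fin n) ℝ :=
  Matrix.reindex (finSumFinEquiv.trans (finCongr (Nat.sub_add_cancel hs.le)))
    (finSumFinEquiv.trans (finCongr (Nat.sub_add_cancel hs.le)))
    (Matrix.fromBlocks (matExp (t • adRes C s hs)) 0 0 (1 : Matrix (Fin s) (Fin s) ℝ))

/-- `M(x) = D_0(−x_n) · D_1(−x_{n−1}) ⋯ D_{n−2}(−x_2)`. -/
def Mmat {n : ℕ} (hn : 2 ≤ n) (C : Fin n → Fin n → Fin n → ℝ)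
    (x : Fin n → ℝ) : Matrix (Fin n) (Fin n) ℝ :=
  (List.ofFn (fun k : Fin (n - 1) =>
    Dmat C k.val (by have := k.isLt; omega)
      (- x ⟨n - 1 - k.val, by have := k.isLt; omega⟩))).prod

/-- The Maurer–Cartan coframe of `𝔤` on `ℝⁿ`: `τⁱ(x)(v) = Σ_j M(x)ⁱ_j v_j`. -/
def tau {n : ℕ} (hn : 2 ≤ n) (C : Fin n → Fin n → Fin n → ℝ) (i : Fin n) :
    (Fin n → ℝ) → (Fin n → ℝ) →L[ℝ] ℝ :=
  fun x => ∑ j, Mmat hn C x i j • (ContinuousLinearMap.proj j : (Fin n → ℝ) →L[ℝ] ℝ)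

/-- The frame of vector fields dual to the Maurer–Cartan coframe:
the `j`-th component of `X_i(x)` is `(M(x)⁻¹)_{j i}`. -/
def Xvf {n : ℕ} (hn : 2 ≤ n) (C : Fin n → Fin n → Fin n → ℝ) (i : Fin n) :
    (Fin n → ℝ) → (Fin n → ℝ) :=
  fun x j => (Mmat hn C x)⁻¹ j i

end

/-!
Each factor `D_s(t)` is a one-parameter group in `t`, so `M(x)⁻¹ = D_{n-2}(x_2) ⋯ D_0(x_n)`.
Since `[e_{n-s}, 𝔨_s] ⊆ 𝔨_{s+1}`, the `e_j`-row of `D_s(t)` is the identity row unless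
`e_j ∈ 𝔨_{s+1}`; consequently the `e_j`-row of `M(x)⁻¹` depends only on the coordinates `x_k`
with `k > j`. The flow equation `γ' = X_i(γ)` is therefore a triangular system, solved by
quadratures from the last coordinate down: the Picard iteration becomes stationary after `n`
steps, and its fixed point is a global integral curve.
-/

section TriangularODE

variable {n : ℕ} (F : (Fin n → ℝ) → Fin n → ℝ) (x₀ : Fin n → ℝ)

noncomputable def picardIterate : ℕ → ℝ → Fin n → ℝ
  | 0 => fun _ => x₀
  | m + 1 => fun t j => x₀ j + ∫ s in (0 : ℝ)..t, F (picardIterate m s) j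

variable {F}

theorem continuous_picardIterate (hF : Continuous F) :
    ∀ m, Continuous (picardIterate F x₀ m)
  | 0 => continuous_const
  | m + 1 => continuous_pi fun j => continuous_const.add <|
      intervalIntegral.continuous_primitive (fun a b =>
        ((continuous_apply j).comp (hF.comp (continuous_picardIterate hF m))).intervalIntegrable
          a b) 0

theorem picardIterate_apply_eq_succ
    (hF : ∀ j x y, (∀ k, j < k → x k = y k) → F x j = F y j) :
    ∀ (m : ℕ) (t : ℝ) (j : Fin n), n ≤ j + m →
      picardIterate F x₀ m t j = picardIterate F x₀ (m + 1) t j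
  | 0, _, j, hj => absurd j.isLt (by omega)
  | m + 1, t, j, hj => by
    show x₀ j + _ = x₀ j + _
    congr 1
    refine intervalIntegral.integral_congr fun s _ => hF j _ _ fun k hk => ?_
    exact picardIterate_apply_eq_succ hF m s k (by omega)

theorem exists_hasDerivAt_of_triangular (hF_cont : Continuous F)
    (hF : ∀ j x y, (∀ k, j < k → x k = y k) → F x j = F y j) :
    ∃ γ : ℝ → Fin n → ℝ, γ 0 = x₀ ∧ ∀ t, HasDerivAt γ (F (γ t)) t := by
  refine ⟨picardIterate F x₀ (n + 1), funext fun j => by simp [picardIterate], fun t => ?_⟩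
  have hstable : picardIterate F x₀ n t = picardIterate F x₀ (n + 1) t :=
    funext fun j => picardIterate_apply_eq_succ x₀ hF n t j (by omega)
  rw [← hstable, hasDerivAt_pi]
  intro j
  exact (((continuous_apply j).comp (hF_cont.comp (continuous_picardIterate x₀ hF_cont n))
    ).integral_hasStrictDerivAt 0 t).hasDerivAt.const_add (x₀ j)

end TriangularODE

theorem List.prod_ofFn_mul_prod_reverse_ofFn {M : Type*} [Monoid M] :
    ∀ {k : ℕ} (f g : Fin k → M), (∀ i, f i * g i = 1) →
      (List.ofFn f).prod * (List.ofFn g).reverse.prod = 1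
  | 0, _, _, _ => by simp
  | k + 1, f, g, h => by
    rw [List.ofFn_succ, List.ofFn_succ, List.prod_cons, List.reverse_cons, List.prod_append,
      List.prod_singleton, mul_assoc, ← mul_assoc (List.prod _),
      List.prod_ofFn_mul_prod_reverse_ofFn _ _ fun i => h i.succ, one_mul, h]

namespace Matrix

variable {m : Type*} [Fintype m] [DecidableEq m]

theorem mul_row_eq_of_row_eq_one {R : Type*} [NonAssocSemiring R] {A : Matrix m m R} {j : m}
    (hA : A j = (1 : Matrix m m R) j) (B : Matrix m m R) : (A * B) j = B j := by
  ext b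
  simp [mul_apply, hA, one_apply]

theorem list_prod_mul_row_eq_of_row_eq_one {R : Type*} [Semiring R] {j : m} :
    ∀ (l : List (Matrix m m R)), (∀ A ∈ l, A j = (1 : Matrix m m R) j) →
      ∀ B : Matrix m m R, (l.prod * B) j = B j
  | [], _, B => by rw [List.prod_nil, one_mul]
  | A :: l, hl, B => by
    rw [List.prod_cons, mul_assoc, mul_row_eq_of_row_eq_one (hl A List.mem_cons_self),
      list_prod_mul_row_eq_of_row_eq_one l fun A' hA' => hl A' (List.mem_cons_of_mem A hA')]

theorem list_prod_row_eq_drop {R : Type*} [Semiring R] {j : m} (l : List (Matrix m m R)) (k : ℕ)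
    (hl : ∀ A ∈ l.take k, A j = (1 : Matrix m m R) j) : l.prod j = (l.drop k).prod j := by
  rw [← List.prod_take_mul_prod_drop l k, list_prod_mul_row_eq_of_row_eq_one _ hl]

open scoped Norms.Operator in
theorem exp_row_eq_one_of_row_eq_zero {𝕂 : Type*} [RCLike 𝕂] {A : Matrix m m 𝕂} {j : m}
    (hA : A j = 0) : NormedSpace.exp A j = (1 : Matrix m m 𝕂) j := by
  have hpow : ∀ k, k ≠ 0 → ∀ b, (A ^ k) j b = 0 := by
    rintro (_ | k) hk b
    · contradiction
    · simp [pow_succ', mul_apply, hA]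
  ext b
  have hsum : HasSum (fun k : ℕ => ((k.factorial⁻¹ : 𝕂) • A ^ k) j b) (NormedSpace.exp A j b) :=
    Pi.hasSum.1 (Pi.hasSum.1 (NormedSpace.exp_series_hasSum_exp' A) j) b
  refine hsum.unique ?_
  convert hasSum_single (f := fun k : ℕ => ((k.factorial⁻¹ : 𝕂) • A ^ k) j b) 0
    fun k hk => by rw [smul_apply, hpow k hk b, smul_zero]
  simp

end Matrix

theorem structConst_eq_zero_of_le {K L : Type*} [CommRing K] [LieRing L] [LieAlgebra K L]
    {n : ℕ} (B : Module.Basis (Fin n) K L) {C : Fin n → Fin n → Fin n → K}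
    (hC : ∀ j k, ⁅B j, B k⁆ = ∑ i, C i j k • B i)
    (hchain : ∀ p : ℕ, p < n → ∀ x y : L,
      x ∈ Submodule.span K (⇑B '' {i : Fin n | (i : ℕ) < p + 1}) →
      y ∈ Submodule.span K (⇑B '' {i : Fin n | (i : ℕ) < p}) →
      ⁅x, y⁆ ∈ Submodule.span K (⇑B '' {i : Fin n | (i : ℕ) < p}))
    (a b c : Fin n) (hba : b ≤ a) (hcb : c ≤ b) : C a b c = 0 := by
  rcases hcb.eq_or_lt with rfl | hcb
  · have h : ∑ i, C i c c • B i = 0 := by rw [← hC, lie_self]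
    exact Fintype.linearIndependent_iff.mp B.linearIndependent _ h a
  · have hmem := hchain b b.isLt (B b) (B c) (Submodule.subset_span ⟨b, by simp, rfl⟩)
      (Submodule.subset_span ⟨c, hcb, rfl⟩)
    rw [hC, Module.Basis.mem_span_image] at hmem
    by_contra hne
    have ha : a ∈ (B.repr (∑ i, C i b c • B i)).support := by
      rwa [Finsupp.mem_support_iff, Module.Basis.repr_sum_self]
    exact absurd (hmem ha) (not_lt.2 hba)

section MaurerCartan

variable {n : ℕ} (C : Fin n → Fin n → Fin n → ℝ)

theorem Dmat_add (s : ℕ) (hs : s < n) (t u : ℝ) :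
    Dmat C s hs (t + u) = Dmat C s hs t * Dmat C s hs u := by
  have hexp : matExp ((t + u) • adRes C s hs)
      = matExp (t • adRes C s hs) * matExp (u • adRes C s hs) := by
    rw [matExp, matExp, matExp, add_smul, Matrix.exp_add_of_commute _ _
      (((Commute.refl (adRes C s hs)).smul_left t).smul_right u)]
  simp only [Dmat, Matrix.reindex_apply, Matrix.submatrix_mul_equiv, Matrix.fromBlocks_multiply,
    hexp, Matrix.mul_zero, Matrix.zero_mul, Matrix.mul_one, add_zero, zero_add]

theorem Dmat_zero (s : ℕ) (hs : s < n) : Dmat C s hs 0 = 1 := by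
  rw [Dmat, matExp, zero_smul, NormedSpace.exp_zero, Matrix.fromBlocks_one, Matrix.reindex_apply,
    Matrix.submatrix_one_equiv]

open scoped Matrix.Norms.Operator in
theorem continuous_Dmat (s : ℕ) (hs : s < n) : Continuous (Dmat C s hs) :=
  ((NormedSpace.exp_continuous.comp (continuous_id.smul continuous_const)).matrix_fromBlocks
    continuous_const continuous_const continuous_const).matrix_reindex _ _

theorem Dmat_row_eq_one {C : Fin n → Fin n → Fin n → ℝ}
    (hC0 : ∀ a b c : Fin n, b ≤ a → c ≤ b → C a b c = 0)
    (s : ℕ) (hs : s < n) (t : ℝ) (j : Fin n) (hj : n - 1 - s ≤ j) :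
    Dmat C s hs t j = (1 : Matrix (Fin n) (Fin n) ℝ) j := by
  set e := finSumFinEquiv.trans (finCongr (Nat.sub_add_cancel hs.le))
  have hblock : Matrix.fromBlocks (matExp (t • adRes C s hs)) 0 0 1 (e.symm j)
      = (1 : Matrix (Fin (n - s) ⊕ Fin s) (Fin (n - s) ⊕ Fin s) ℝ) (e.symm j) := by
    rw [← Matrix.fromBlocks_one]
    rcases hje : e.symm j with a | a
    · have ha : (a : ℕ) = j := by
        rw [Equiv.symm_apply_eq] at hje
        simp [hje, e]
      have hrow : (t • adRes C s hs) a = 0 := by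
        ext c
        rw [Matrix.smul_apply, adRes, Pi.zero_apply,
          hC0 _ _ _ (by rw [Fin.le_def]; simp only [Fin.val_castLE]; omega)
            (by rw [Fin.le_def]; simp only [Fin.val_castLE]; omega), smul_zero]
      ext (c | c)
      · exact congrFun (Matrix.exp_row_eq_one_of_row_eq_zero hrow) c
      · rfl
    · ext (c | c) <;> rfl
  ext b
  change Matrix.fromBlocks (matExp (t • adRes C s hs)) 0 0 1 (e.symm j) (e.symm b) = _
  rw [hblock]
  exact congrFun (congrFun (Matrix.submatrix_one_equiv e.symm) j) b

-- `D_{n-2}(x_2), …, D_0(x_n)`; the coordinate `x_m` of the paper is `x ⟨m - 1, _⟩` here.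
noncomputable def MmatInvFactors (x : Fin n → ℝ) : List (Matrix (Fin n) (Fin n) ℝ) :=
  (List.ofFn fun k : Fin (n - 1) =>
    Dmat C k (by omega) (x ⟨n - 1 - k, by omega⟩)).reverse

noncomputable def MmatInv (x : Fin n → ℝ) : Matrix (Fin n) (Fin n) ℝ :=
  (MmatInvFactors C x).prod

theorem Mmat_mul_MmatInv (hn : 2 ≤ n) (x : Fin n → ℝ) : Mmat hn C x * MmatInv C x = 1 :=
  List.prod_ofFn_mul_prod_reverse_ofFn _ _ fun k => by
    rw [← Dmat_add, neg_add_cancel, Dmat_zero]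

theorem Xvf_apply (hn : 2 ≤ n) (i : Fin n) (x : Fin n → ℝ) (j : Fin n) :
    Xvf hn C i x j = MmatInv C x j i := by
  rw [Xvf, Matrix.inv_eq_right_inv (Mmat_mul_MmatInv C hn x)]

theorem length_MmatInvFactors (x : Fin n → ℝ) : (MmatInvFactors C x).length = n - 1 := by
  simp [MmatInvFactors]

theorem getElem_MmatInvFactors (x : Fin n → ℝ) (m : ℕ) (hm : m < n - 1) :
    (MmatInvFactors C x)[m]'(by rwa [length_MmatInvFactors]) =
      Dmat C (n - 2 - m) (by omega) (x ⟨m + 1, by omega⟩) := by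
  simp only [MmatInvFactors, List.getElem_reverse, List.getElem_ofFn, List.length_ofFn]
  congr 2
  ext
  simp only
  omega

theorem MmatInv_row_congr {C : Fin n → Fin n → Fin n → ℝ}
    (hC0 : ∀ a b c : Fin n, b ≤ a → c ≤ b → C a b c = 0)
    {x y : Fin n → ℝ} (j : Fin n) (hxy : ∀ k, j < k → x k = y k) :
    MmatInv C x j = MmatInv C y j := by
  have hdrop : ∀ z : Fin n → ℝ, MmatInv C z j = ((MmatInvFactors C z).drop j).prod j := by
    intro z
    refine Matrix.list_prod_row_eq_drop _ _ fun A hA => ?_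
    obtain ⟨m, hm, rfl⟩ := List.getElem_of_mem hA
    rw [List.length_take, length_MmatInvFactors] at hm
    rw [List.getElem_take, getElem_MmatInvFactors C z m (by omega)]
    exact Dmat_row_eq_one hC0 _ _ _ j (by omega)
  have hsuffix : (MmatInvFactors C x).drop j = (MmatInvFactors C y).drop j := by
    refine List.ext_getElem (by simp [length_MmatInvFactors]) fun m hmx hmy => ?_
    rw [List.length_drop, length_MmatInvFactors] at hmx
    rw [List.getElem_drop, List.getElem_drop, getElem_MmatInvFactors C x _ (by omega),
      getElem_MmatInvFactors C y _ (by omega),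
      hxy _ (by rw [Fin.lt_def]; simp only; omega)]
  rw [hdrop, hdrop, hsuffix]

theorem continuous_MmatInv : Continuous (MmatInv C) := by
  have h : MmatInv C = fun x => ((List.finRange (n - 1)).reverse.map fun k : Fin (n - 1) =>
      Dmat C k (by omega) (x ⟨n - 1 - k, by omega⟩)).prod := by
    funext x
    rw [MmatInv, MmatInvFactors, List.ofFn_eq_map, List.map_reverse]
  rw [h]
  exact continuous_list_prod _ fun k _ => (continuous_Dmat C _ _).comp (continuous_apply _)

theorem continuous_Xvf (hn : 2 ≤ n) (i : Fin n) : Continuous (Xvf hn C i) := by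
  simp only [funext₂ (Xvf_apply C hn i)]
  exact continuous_pi fun j => (continuous_MmatInv C).matrix_elem j i

end MaurerCartan

/-- Completeness of the dual frame.
Each vector field `X_i` dual to the Maurer–Cartan coframe is complete: through every
initial point there is an integral curve defined for all time. -/
theorem statement6
    (n : ℕ) (hn : 2 ≤ n)
    (L : Type) [LieRing L] [LieAlgebra ℝ L] (B : Module.Basis (Fin n) ℝ L)
    (C : Fin n → Fin n → Fin n → ℝ)
    (hC : ∀ j k, ⁅B j, B k⁆ = ∑ i, C i j k • B i)
    (hchain : ∀ p : ℕ, p < n → ∀ x y : L,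
      x ∈ Submodule.span ℝ (⇑B '' {i : Fin n | (i : ℕ) < p + 1}) →
      y ∈ Submodule.span ℝ (⇑B '' {i : Fin n | (i : ℕ) < p}) →
      ⁅x, y⁆ ∈ Submodule.span ℝ (⇑B '' {i : Fin n | (i : ℕ) < p})) :
    ∀ (i : Fin n) (x₀ : Fin n → ℝ),
      ∃ γ : ℝ → (Fin n → ℝ), γ 0 = x₀ ∧
        ∀ t : ℝ, HasDerivAt γ (Xvf hn C i (γ t)) t := by
  intro i x₀
  have hC0 := structConst_eq_zero_of_le B hC hchain
  refine exists_hasDerivAt_of_triangular x₀ (continuous_Xvf C hn i) fun j x y hxy => ?_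
  rw [Xvf_apply, Xvf_apply, MmatInv_row_congr hC0 j hxy]
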